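/- Let G be an inverse semigroup with idempotent set E. For g ∈ G define the ℂ-linear operator α_g on the space of finitely supported functions ξ : E → ℂ by (α_g ξ)(e) := ξ(g* e g) if e · (g g*) = e, and (α_g ξ)(e) := 0 otherwise. Then: (i) α_{g h} = α_g ∘ α_h for all g, h ∈ G; and (ii) for every idempotent e ∈ E and all finitely supported ξ, η : E → ℂ one has (α_e ξ) · η = ξ · (α_e η), where · denotes the pointwise product of functions. -/

import Mathlib

/-! `α_g` is the transpose of the partial bijection `f ↦ g f g*` from the idempotents below
`g* g` onto those below `g g*`. Part (i) is the composition law of these partial bijections,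
which comes down to: `f ≤ (gh)(gh)*` iff `f ≤ g g*` and `g* f g ≤ h h*`. For an idempotent `e`
we have `e* = e`, so the partial bijection of `e` is the identity on `{f ≤ e}` and `α_e` is
multiplication by its indicator, which makes (ii) evident. -/

/-- An inverse semigroup: a semigroup with an involution `g ↦ g*` such that
`g** = g`, `(gh)* = h* g*`, `g g* g = g`, and any two idempotents commute. -/
class InverseSemigroup (G : Type*) extends Semigroup G, Star G where
  star_star : ∀ g : G, star (star g) = g
  star_mul : ∀ g h : G, star (g * h) = star h * star g
  mul_star_mul_self : ∀ g : G, g * star g * g = g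
  idem_mul_comm : ∀ e f : G, e * e = e → f * f = f → e * f = f * e

namespace InverseSemigroup

variable {G : Type*} [InverseSemigroup G]

lemma idem_star_mul (g : G) : (star g * g) * (star g * g) = star g * g := by
  have h := mul_star_mul_self (star g)
  rw [star_star] at h
  rw [← mul_assoc, h]

lemma idem_mul_star (g : G) : (g * star g) * (g * star g) = g * star g := by
  have h := mul_star_mul_self g
  rw [← mul_assoc, h]

lemma conj_idem (g : G) {e : G} (he : e * e = e) :
    (g * e * star g) * (g * e * star g) = g * e * star g := by
  have hsg := idem_star_mul g
  have hcomm := idem_mul_comm e (star g * g) he hsg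
  have hg := mul_star_mul_self g
  calc (g * e * star g) * (g * e * star g)
      = g * (e * ((star g * g) * (e * star g))) := by simp only [mul_assoc]
    _ = g * (e * (star g * g) * (e * star g)) := by simp only [mul_assoc]
    _ = g * ((star g * g) * e * (e * star g)) := by rw [hcomm]
    _ = g * (star g * (g * ((e * e) * star g))) := by simp only [mul_assoc]
    _ = g * (star g * (g * (e * star g))) := by rw [he]
    _ = (g * star g * g) * (e * star g) := by simp only [mul_assoc]
    _ = g * (e * star g) := by rw [hg]
    _ = g * e * star g := by rw [mul_assoc]

lemma conj_idem' (g : G) {e : G} (he : e * e = e) :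
    (star g * e * g) * (star g * e * g) = star g * e * g := by
  have h := conj_idem (star g) he
  rwa [star_star] at h

/-- If `e ≤ g g*` then `g (g* e g) g* = e`. -/
lemma conj_conj (g : G) {e : G} (he : e * e = e) (hle : e * (g * star g) = e) :
    g * (star g * e * g) * star g = e := by
  have hgg := idem_mul_star g
  have hcomm := idem_mul_comm e (g * star g) he hgg
  calc g * (star g * e * g) * star g
      = (g * star g) * (e * (g * star g)) := by simp only [mul_assoc]
    _ = (g * star g) * e := by rw [hle]
    _ = e * (g * star g) := by rw [hcomm]
    _ = e := hle

end InverseSemigroup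

/-- The set of idempotents of `G`, as a type. -/
abbrev Idem (G : Type*) [InverseSemigroup G] : Type _ := {e : G // e * e = e}

open InverseSemigroup in
/-- The action `α_g` on finitely supported functions `ξ : E → ℂ` given by
`(α_g ξ)(e) = ξ(g* e g)` if `e (g g*) = e`, and `0` otherwise. -/
noncomputable def alphaMap {G : Type*} [InverseSemigroup G] (g : G) (ξ : Idem G →₀ ℂ) :
    Idem G →₀ ℂ :=
  letI := Classical.decEq G
  Finsupp.onFinset
    (ξ.support.image fun e' => (⟨g * e'.1 * star g, conj_idem g e'.2⟩ : Idem G))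
    (fun e => if e.1 * (g * star g) = e.1
      then ξ ⟨star g * e.1 * g, conj_idem' g e.2⟩ else 0)
    (by
      intro e he
      try dsimp only at he
      by_cases hc : e.1 * (g * star g) = e.1
      · rw [if_pos hc] at he
        refine Finset.mem_image.2 ⟨⟨star g * e.1 * g, conj_idem' g e.2⟩,
          Finsupp.mem_support_iff.2 he, ?_⟩
        exact Subtype.ext (conj_conj g e.2 hc)
      · rw [if_neg hc] at he
        exact absurd rfl he)

namespace InverseSemigroup

variable {G : Type*} [InverseSemigroup G]

lemma star_mul_self_mul_star (g : G) : star g * g * star g = star g := by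
  simpa only [star_star] using mul_star_mul_self (star g)

lemma star_eq_self_of_mul_self {e : G} (he : e * e = e) : star e = e := by
  have hstar : star e * star e = star e := by rw [← InverseSemigroup.star_mul, he]
  have hcomm := idem_mul_comm e (star e) he hstar
  calc star e = star e * e * star e := (star_mul_self_mul_star e).symm
    _ = star e * star e * e := by rw [mul_assoc, hcomm, ← mul_assoc]
    _ = star e * e := by rw [hstar]
    _ = e * star e * e := by rw [hcomm, mul_assoc, he]
    _ = e := mul_star_mul_self e

lemma star_mul_mul_mul (g h f : G) :
    star (g * h) * f * (g * h) = star h * (star g * f * g) * h := by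
  simp only [InverseSemigroup.star_mul, mul_assoc]

lemma star_mul_mul_eq_of_mul_eq {e f : G} (he : e * e = e) (hf : f * f = f)
    (hfe : f * e = f) : star e * f * e = f := by
  rw [star_eq_self_of_mul_self he, idem_mul_comm e f he hf, mul_assoc, he, hfe]

/-- In terms of the natural order `f ≤ e ↔ f * e = f` on idempotents: `f ≤ (gh)(gh)*` if and
only if `f ≤ g g*` and `g* f g ≤ h h*`. -/
lemma mul_mul_mul_star_eq_self_iff (g h : G) {f : G} (hf : f * f = f) :
    f * (g * h * star (g * h)) = f ↔
      f * (g * star g) = f ∧ star g * f * g * (h * star h) = star g * f * g := by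
  have hcomm := idem_mul_comm (h * star h) (star g * g) (idem_mul_star h) (idem_star_mul g)
  have hrange : g * h * star (g * h) = g * (h * star h) * star g := by
    simp only [InverseSemigroup.star_mul, mul_assoc]
  rw [hrange]
  constructor
  · intro hle
    have hle_g : g * (h * star h) * star g * (g * star g) = g * (h * star h) * star g := by
      rw [mul_assoc _ (star g), ← mul_assoc (star g), star_mul_self_mul_star]
    refine ⟨by rw [← hle, mul_assoc, hle_g], ?_⟩
    calc star g * f * g * (h * star h)
        = star g * f * (g * star g * g) * (h * star h) := by rw [mul_star_mul_self]
      _ = star g * f * g * ((star g * g) * (h * star h)) := by simp only [mul_assoc]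
      _ = star g * (f * (g * (h * star h) * star g)) * g := by
          rw [← hcomm]; simp only [mul_assoc]
      _ = star g * f * g := by rw [hle]
  · rintro ⟨hle_g, hle_h⟩
    have hfg : g * star g * f = f := by
      rw [← idem_mul_comm f (g * star g) hf (idem_mul_star g), hle_g]
    calc f * (g * (h * star h) * star g)
        = g * (star g * f * g * (h * star h)) * star g := by
          conv_lhs => rw [← hfg]
          simp only [mul_assoc]
      _ = g * (star g * f * g) * star g := by rw [hle_h]
      _ = f := conj_conj g hf hle_g

end InverseSemigroup

section alphaMap

open InverseSemigroup

variable {G : Type*} [InverseSemigroup G]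

lemma alphaMap_apply_of_mul_eq {g : G} (ξ : Idem G →₀ ℂ) {f : Idem G}
    (hf : f.1 * (g * star g) = f.1) :
    alphaMap g ξ f = ξ ⟨star g * f.1 * g, conj_idem' g f.2⟩ := by
  classical
  simp [alphaMap, hf]

lemma alphaMap_apply_of_mul_ne {g : G} (ξ : Idem G →₀ ℂ) {f : Idem G}
    (hf : f.1 * (g * star g) ≠ f.1) : alphaMap g ξ f = 0 := by
  classical
  simp [alphaMap, hf]

theorem alphaMap_mul (g h : G) : alphaMap (g * h) = alphaMap g ∘ alphaMap h := by
  funext ξ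
  ext f
  have hiff := mul_mul_mul_star_eq_self_iff g h f.2
  rw [Function.comp_apply]
  by_cases hg : f.1 * (g * star g) = f.1
  · by_cases hh : star g * f.1 * g * (h * star h) = star g * f.1 * g
    · rw [alphaMap_apply_of_mul_eq ξ (hiff.2 ⟨hg, hh⟩), alphaMap_apply_of_mul_eq _ hg,
        alphaMap_apply_of_mul_eq (f := ⟨_, conj_idem' g f.2⟩) ξ hh]
      exact congrArg ξ (Subtype.ext (star_mul_mul_mul g h f.1))
    · rw [alphaMap_apply_of_mul_ne ξ fun hgh => hh (hiff.1 hgh).2, alphaMap_apply_of_mul_eq _ hg,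
        alphaMap_apply_of_mul_ne (f := ⟨_, conj_idem' g f.2⟩) ξ hh]
  · rw [alphaMap_apply_of_mul_ne ξ fun hgh => hg (hiff.1 hgh).1, alphaMap_apply_of_mul_ne _ hg]

lemma alphaMap_apply_of_mul_self {e : G} (he : e * e = e) (ξ : Idem G →₀ ℂ) (f : Idem G) :
    alphaMap e ξ f = {x : Idem G | x.1 * e = x.1}.indicator ξ f := by
  have hrange : e * star e = e := by rw [star_eq_self_of_mul_self he, he]
  by_cases hfe : f.1 * e = f.1
  · rw [Set.indicator_of_mem (show f ∈ {x : Idem G | x.1 * e = x.1} from hfe),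
      alphaMap_apply_of_mul_eq ξ (by rwa [hrange])]
    exact congrArg ξ (Subtype.ext (star_mul_mul_eq_of_mul_eq he f.2 hfe))
  · rw [Set.indicator_of_notMem (show f ∉ {x : Idem G | x.1 * e = x.1} from hfe)]
    exact alphaMap_apply_of_mul_ne ξ (by rwa [hrange])

end alphaMap

theorem stmt_12 {G : Type*} [InverseSemigroup G] :
    (∀ g h : G, alphaMap (g * h) = alphaMap g ∘ alphaMap h) ∧
    (∀ e : G, e * e = e → ∀ ξ η : Idem G →₀ ℂ, ∀ f : Idem G,
      alphaMap e ξ f * η f = ξ f * alphaMap e η f) := by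
  refine ⟨alphaMap_mul, fun e he ξ η f => ?_⟩
  rw [alphaMap_apply_of_mul_self he, alphaMap_apply_of_mul_self he,
    ← Set.indicator_mul_left, Set.indicator_mul_right]
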